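/- The set of irrational numbers α such that limsup_{N→∞} N^{−2}·∑_{k=1}^{N} 1/(k·‖αk‖) = +∞ (equivalently, such that ∑_{k=1}^{N} 1/(k·‖αk‖) is not O(N²)) is residual in ℝ, i.e. it contains a countable intersection of open dense subsets of ℝ; in particular it is of second Baire category. -/

import Mathlib

open Real Set Filter

/-- The distance from a real number to the nearest integer. -/
noncomputable def nearestIntDist (x : ℝ) : ℝ := |x - (round x : ℤ)|

lemma nearestIntDist_nonneg (x : ℝ) : 0 ≤ nearestIntDist x := abs_nonneg _

lemma nearestIntDist_le_add (x y : ℝ) :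
    nearestIntDist x ≤ |x - y| + nearestIntDist y := by
  have h1 : nearestIntDist x ≤ |x - (round y : ℤ)| := round_le x (round y)
  have h2 : |x - (round y : ℤ)| ≤ |x - y| + |y - (round y : ℤ)| := by
    have e : x - (round y : ℤ) = (x - y) + (y - (round y : ℤ)) := by ring
    rw [e]; exact abs_add_le _ _
  have h3 : nearestIntDist y = |y - (round y : ℤ)| := rfl
  linarith

lemma nearestIntDist_lipschitz : LipschitzWith 1 nearestIntDist := by
  apply LipschitzWith.of_dist_le_mul
  intro x y
  rw [NNReal.coe_one, one_mul, Real.dist_eq, Real.dist_eq, abs_sub_le_iff]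
  constructor
  · linarith [nearestIntDist_le_add x y]
  · have := nearestIntDist_le_add y x
    rw [abs_sub_comm y x] at this
    linarith

lemma nearestIntDist_continuous : Continuous nearestIntDist :=
  nearestIntDist_lipschitz.continuous

lemma nearestIntDist_int_add (j : ℤ) (t : ℝ) (h0 : 0 ≤ t) (h1 : t < 1/2) :
    nearestIntDist ((j : ℝ) + t) = t := by
  have hr : round ((j : ℝ) + t) = j := by
    rw [round_eq, add_assoc, Int.floor_intCast_add]
    have : ⌊t + 1/2⌋ = 0 := by
      apply Int.floor_eq_zero_iff.mpr
      constructor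
      · simp; linarith
      · simp; linarith
    omega
  rw [nearestIntDist, hr]
  simp [abs_of_nonneg h0]

/-- The basic open set. -/
def W (m N : ℕ) : Set ℝ :=
  {α : ℝ | 0 < nearestIntDist (α * N) ∧ (m : ℝ) * N ^ 2 * (N * nearestIntDist (α * N)) < 1}

lemma isOpen_W (m N : ℕ) : IsOpen (W m N) := by
  have hc : Continuous fun α : ℝ => nearestIntDist (α * N) :=
    nearestIntDist_continuous.comp (continuous_id.mul continuous_const)
  have hset : W m N = (fun α : ℝ => nearestIntDist (α * N)) ⁻¹'
      {y : ℝ | 0 < y ∧ (m : ℝ) * N ^ 2 * (N * y) < 1} := rfl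
  rw [hset]
  apply IsOpen.preimage hc
  have : {y : ℝ | 0 < y ∧ (m : ℝ) * N ^ 2 * (N * y) < 1} =
      (fun y : ℝ => y) ⁻¹' Ioi 0 ∩ (fun y : ℝ => (m : ℝ) * N ^ 2 * (N * y)) ⁻¹' Iio 1 := rfl
  rw [this]
  exact (isOpen_Ioi.preimage continuous_id).inter
    (isOpen_Iio.preimage (by continuity))

def V (m M : ℕ) : Set ℝ := ⋃ (N : ℕ) (_ : max M 1 ≤ N), W m N

lemma isOpen_V (m M : ℕ) : IsOpen (V m M) :=
  isOpen_iUnion fun N => isOpen_iUnion fun _ => isOpen_W m N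

set_option maxHeartbeats 1600000 in
lemma dense_V (m M : ℕ) : Dense (V m M) := by
  rw [dense_iff_inter_open]
  rintro U hU ⟨x, hx⟩
  obtain ⟨ε, hε, hball⟩ := Metric.isOpen_iff.mp hU x hx
  set a := x - ε/2 with ha
  set b := x + ε/2 with hb
  have hab : a < b := by simp [ha, hb]; linarith
  have hsub : Ioo a b ⊆ U := by
    intro y hy
    apply hball
    rw [Metric.mem_ball, Real.dist_eq, abs_lt]
    constructor <;> simp [ha, hb] at hy ⊢ <;> linarith [hy.1, hy.2]
  obtain ⟨N₀, hN₀⟩ := exists_nat_gt (2 / (b - a))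
  set N : ℕ := max N₀ (max M 1) with hN
  have hN1 : 1 ≤ N := le_trans (le_max_right M 1) (le_max_right _ _)
  have hNpos : (0:ℝ) < N := by exact_mod_cast hN1
  have hNM : max M 1 ≤ N := le_max_right _ _
  have hNgt : 2 / (b - a) < N := lt_of_lt_of_le hN₀ (by exact_mod_cast le_max_left _ _)
  have hba : (0:ℝ) < b - a := by linarith
  have h2N : 2 / (N:ℝ) < b - a := by
    rw [div_lt_iff₀ hNpos]
    rw [div_lt_iff₀ hba] at hNgt
    linarith
  have h2N' : (1:ℝ)/N < (b-a)/2 := by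
    have e : (2:ℝ)/↑N = 2*(1/↑N) := by ring
    linarith [h2N, e.le, e.ge]
  have hmn : (0:ℝ) ≤ (m:ℝ) * N^3 := by positivity
  set j : ℤ := ⌊(N:ℝ) * a⌋ + 1 with hj
  have hja : (N:ℝ) * a < j := by
    have := Int.lt_floor_add_one ((N:ℝ) * a)
    push_cast [hj]; linarith
  have hjb : (j:ℝ) ≤ (N:ℝ) * a + 1 := by
    have := Int.floor_le ((N:ℝ) * a)
    push_cast [hj]; linarith
  have haj : a < (j:ℝ) / N := by rw [lt_div_iff₀ hNpos]; linarith
  have hjb' : (j:ℝ) / N + 1 / N < b := by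
    rw [← add_div, div_lt_iff₀ hNpos]
    have h2' : (2:ℝ) < (b - a) * N := (div_lt_iff₀ hNpos).mp h2N
    nlinarith
  set δ : ℝ := min ((b - (j:ℝ)/N)/2) (1 / (2 * N * ((m:ℝ) * N^3 + 2))) with hδ
  have hdenpos : (0:ℝ) < 2 * N * ((m:ℝ) * N^3 + 2) := by positivity
  have hδpos : 0 < δ := by
    apply lt_min
    · have : (0:ℝ) < 1/N := by positivity
      linarith
    · positivity
  have hδ2 : δ ≤ 1 / (2 * N * ((m:ℝ) * N^3 + 2)) := min_le_right _ _
  set α : ℝ := (j:ℝ)/N + δ with hα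
  clear_value α
  clear_value δ
  clear_value j
  clear_value N
  have hδN : δ * N ≤ 1 / (2 * ((m:ℝ) * N^3 + 2)) := by
    have e : (1 / (2 * N * ((m:ℝ)*N^3+2))) * N = 1/(2*((m:ℝ)*N^3+2)) := by
      field_simp
    calc δ * N ≤ (1 / (2 * N * ((m:ℝ)*N^3+2))) * N :=
          mul_le_mul_of_nonneg_right hδ2 hNpos.le
      _ = _ := e
  have hδNhalf : δ * N < 1/2 := by
    have h2 : (1:ℝ) / (2 * ((m:ℝ) * N^3 + 2)) < 1/2 := by
      rw [div_lt_div_iff₀ (by positivity) (by norm_num)]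
      nlinarith
    linarith
  have hd : nearestIntDist (α * N) = δ * N := by
    have e : α * N = (j:ℝ) + δ * N := by
      rw [hα]; field_simp
    rw [e]
    exact nearestIntDist_int_add j (δ * N) (by positivity) hδNhalf
  refine ⟨α, hsub ⟨?_, ?_⟩, ?_⟩
  · rw [hα]; linarith
  · rw [hα]
    have hlt : δ < 1/(N:ℝ) := by
      have h1 : 1 / (2 * N * ((m:ℝ) * N^3 + 2)) < 1 / N := by
        rw [div_lt_div_iff₀ (by positivity) hNpos]
        nlinarith
      linarith
    linarith
  · have hW : α ∈ W m N := by
      refine ⟨?_, ?_⟩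
      · rw [hd]; exact mul_pos hδpos hNpos
      · rw [hd]
        calc (m:ℝ) * N^2 * (N * (δ * N)) = (m:ℝ) * N^3 * (δ * N) := by ring
          _ ≤ (m:ℝ) * N^3 * (1 / (2 * ((m:ℝ) * N^3 + 2))) :=
              mul_le_mul_of_nonneg_left hδN (by positivity)
          _ < 1 := by
              rw [mul_one_div, div_lt_one (by positivity)]
              nlinarith
    exact mem_iUnion.mpr ⟨N, mem_iUnion.mpr ⟨hNM, hW⟩⟩

/-- The indexed family of open dense sets. -/
def hFam : (ℕ × ℕ) ⊕ ℚ → Set ℝ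
  | Sum.inl (m, M) => V m M
  | Sum.inr q => {(q : ℝ)}ᶜ

lemma isOpen_hFam (i : (ℕ × ℕ) ⊕ ℚ) : IsOpen (hFam i) := by
  rcases i with ⟨m, M⟩ | q
  · exact isOpen_V m M
  · exact isOpen_compl_iff.mpr isClosed_singleton

lemma dense_hFam (i : (ℕ × ℕ) ⊕ ℚ) : Dense (hFam i) := by
  rcases i with ⟨m, M⟩ | q
  · exact dense_V m M
  · exact dense_compl_singleton _

/-- **The set of irrationals whose Hardy–Littlewood sums are not `O(N²)` is
residual.** The set of irrational `α` with
`limsup_{N → ∞} N⁻² ∑_{k=1}^N 1/(k ‖αk‖) = +∞` contains a countable intersection of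
open dense subsets of `ℝ`; in particular it is of second Baire category. -/
theorem not_bigO_sum_residual :
    ∃ g : ℕ → Set ℝ, (∀ n, IsOpen (g n)) ∧ (∀ n, Dense (g n)) ∧
      (⋂ n, g n) ⊆ {α : ℝ | Irrational α ∧
        ∀ C : ℝ, ∃ᶠ N : ℕ in Filter.atTop,
          C * (N : ℝ) ^ 2 <
            ∑ k ∈ Finset.Icc 1 N, 1 / ((k : ℝ) * nearestIntDist (α * (k : ℝ)))} := by
  classical
  refine ⟨fun n => hFam (Denumerable.ofNat _ n), fun n => isOpen_hFam _,
    fun n => dense_hFam _, ?_⟩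
  intro x hx
  have hall : ∀ i, x ∈ hFam i := by
    intro i
    obtain ⟨n, hn⟩ : ∃ n, Denumerable.ofNat ((ℕ × ℕ) ⊕ ℚ) n = i :=
      ⟨_, Denumerable.ofNat_encode i⟩
    have := mem_iInter.mp hx n
    rwa [hn] at this
  constructor
  · rintro ⟨q, hq⟩
    have hne := hall (Sum.inr q)
    simp only [hFam, mem_compl_iff, mem_singleton_iff] at hne
    exact hne hq.symm
  · intro C
    obtain ⟨m, hm⟩ := exists_nat_ge C
    rw [Filter.frequently_atTop]
    intro M
    have hmem := hall (Sum.inl (m, M))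
    simp only [hFam, V, mem_iUnion] at hmem
    obtain ⟨N, hNM, hd, hlt⟩ := hmem
    have hN1 : 1 ≤ N := le_trans (le_max_right M 1) hNM
    have hNpos : (0:ℝ) < N := by exact_mod_cast hN1
    refine ⟨N, le_trans (le_max_left M 1) hNM, ?_⟩
    have hterm : (m:ℝ) * N^2 < 1 / ((N:ℝ) * nearestIntDist (x * N)) := by
      rw [lt_div_iff₀ (by positivity)]
      exact hlt
    have hsum : 1 / ((N:ℝ) * nearestIntDist (x * N)) ≤
        ∑ k ∈ Finset.Icc 1 N, 1 / ((k : ℝ) * nearestIntDist (x * (k : ℝ))) := by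
      apply Finset.single_le_sum (f := fun k : ℕ => 1 / ((k : ℝ) * nearestIntDist (x * k)))
      · intro k _
        apply div_nonneg (by norm_num)
        exact mul_nonneg (Nat.cast_nonneg k) (nearestIntDist_nonneg _)
      · simp [Finset.mem_Icc, hN1]
    have hCm : C * N^2 ≤ (m:ℝ) * N^2 :=
      mul_le_mul_of_nonneg_right hm (by positivity)
    linarith
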